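/- arXiv:1308.3765 — 4 statements merged into one kernel-verified Lean document; each statement's English description precedes it below -/
import Mathlib

section
/- Let B be an ordered category with finitely many objects and finite automorphism groups, such that its additive cover ac(B) admits finite products. Then every morphism in B is an epimorphism. -/
open CategoryTheory Limits

universe v u

/-- Objects of the additive cover `ac(B)`: finite families of `B`-objects. -/
structure ACObj (B : Type u) : Type (u + 1) where
  I : Type
  [fin : Finite I]
  obj : I → B

attribute [instance] ACObj.fin

/-- Morphisms of the additive cover: an index map together with a family of
`B`-morphisms. -/
structure ACHom {B : Type u} [Category.{v} B] (X Y : ACObj B) where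
  f : X.I → Y.I
  φ : ∀ j : X.I, X.obj j ⟶ Y.obj (f j)

/-- The additive cover `ac(B)` of a category `B`. -/
instance ACCategory (B : Type u) [Category.{v} B] : Category (ACObj B) where
  Hom := ACHom
  id X := ⟨fun j => j, fun j => 𝟙 _⟩
  comp {X Y Z} g h := ⟨fun j => h.f (g.f j), fun j => g.φ j ≫ h.φ (g.f j)⟩
  id_comp f := by
    cases f with
    | mk ff φ => simp only [Category.id_comp]
  comp_id f := by
    cases f with
    | mk ff φ => simp only [Category.comp_id]
  assoc f g h := by
    cases f; cases g; cases h; simp only [Category.assoc]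

/-!
If `f ≫ u = f ≫ v` in `B`, then in `ac(B)` the morphism `⟨u, v⟩ : R ⟶ S × S` becomes equal to
the diagonal of `S` after precomposition with `f`; since morphisms out of a one-term family
land in a single summand, `⟨u, v⟩` and the diagonal land in the same summand `P` of `S × S`.
There the diagonal gives a common section `S ⟶ P` of both projections `P ⟶ S`. As `B` is
ordered, a projection with a section is an isomorphism, so the two projections agree on `P`
and `u = v`.
-/

variable {B : Type u} [Category.{v} B]

def IsOrderedCategory (B : Type u) [Category.{v} B] : Prop :=
  ∀ Q R : B, Nonempty (R ⟶ Q) → Nonempty (Q ⟶ R) → ∀ f : R ⟶ Q, IsIso f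

lemma IsOrderedCategory.eq_of_comp_eq_id (hB : IsOrderedCategory B) {S X : B} {d : S ⟶ X}
    {p q : X ⟶ S} (hp : d ≫ p = 𝟙 S) (hq : d ≫ q = 𝟙 S) : p = q := by
  have : IsIso p := hB S X ⟨p⟩ ⟨d⟩ p
  have : Epi d := by rw [IsIso.eq_inv_of_inv_hom_id hp]; infer_instance
  exact (cancel_epi d).mp (hp.trans hq.symm)

namespace ACObj

def single : B ⥤ ACObj B where
  obj Q := ⟨PUnit, fun _ => Q⟩
  map f := ⟨id, fun _ => f⟩

end ACObj

namespace ACHom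

/-- Components of morphisms into a one-term family all land in the same object, so they can be
compared without transport along the index map. -/
lemma φ_congr {X : ACObj B} {S : B} {g h : X ⟶ ACObj.single.obj S} (e : g = h) (j : X.I) :
    (g.φ j : X.obj j ⟶ S) = h.φ j := by
  rw [e]

end ACHom

open ACObj in
lemma eq_of_lift_index_eq_diag_index [HasBinaryProducts (ACObj B)] (hB : IsOrderedCategory B)
    {R S : B} {u v : R ⟶ S}
    (hW : (prod.lift (single.map u) (single.map v)).f ⟨⟩ = (diag (single.obj S)).f ⟨⟩) :
    u = v := by
  let P := single.obj S ⨯ single.obj S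
  let W : single.obj R ⟶ P := prod.lift (single.map u) (single.map v)
  let p : ∀ j : P.I, P.obj j ⟶ S := (prod.fst : P ⟶ _).φ
  let q : ∀ j : P.I, P.obj j ⟶ S := (prod.snd : P ⟶ _).φ
  let Δ : single.obj S ⟶ P := diag (single.obj S)
  have hu : W.φ ⟨⟩ ≫ p (W.f ⟨⟩) = u :=
    ACHom.φ_congr (prod.lift_fst (single.map u) (single.map v)) PUnit.unit
  have hv : W.φ ⟨⟩ ≫ q (W.f ⟨⟩) = v :=
    ACHom.φ_congr (prod.lift_snd (single.map u) (single.map v)) PUnit.unit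
  have hp : Δ.φ ⟨⟩ ≫ p (Δ.f ⟨⟩) = 𝟙 S := ACHom.φ_congr (prod.lift_fst (𝟙 _) (𝟙 _)) PUnit.unit
  have hq : Δ.φ ⟨⟩ ≫ q (Δ.f ⟨⟩) = 𝟙 S := ACHom.φ_congr (prod.lift_snd (𝟙 _) (𝟙 _)) PUnit.unit
  have hpq : p (W.f ⟨⟩) = q (W.f ⟨⟩) := hW ▸ hB.eq_of_comp_eq_id hp hq
  rw [← hu, ← hv, hpq]

theorem epi_of_multiplicative_general
    {B : Type u} [Category.{v} B]
    (hord : ∀ Q R : B, Nonempty (R ⟶ Q) → Nonempty (Q ⟶ R) →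
      ∀ f : R ⟶ Q, IsIso f)
    [HasBinaryProducts (ACObj B)] :
    ∀ {Q R : B} (f : Q ⟶ R), Epi f := by
  intro Q R f
  refine ⟨fun {S} u v h => eq_of_lift_index_eq_diag_index hord ?_⟩
  have hlift : ACObj.single.map f ≫ prod.lift (ACObj.single.map u) (ACObj.single.map v) =
      ACObj.single.map (f ≫ u) ≫ diag _ := by
    rw [prod.comp_lift, prod.comp_diag, ← Functor.map_comp, ← Functor.map_comp, h]
  exact congrArg (fun g => g.f ⟨⟩) hlift

/-- If `B` is an ordered category with finitely many objects and finite
automorphism groups whose additive cover `ac(B)` admits binary products, then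
every morphism of `B` is an epimorphism. -/
theorem epi_of_multiplicative
    {B : Type u} [Category.{v} B] [Finite B]
    (hfinAut : ∀ Q : B, Finite (Q ⟶ Q))
    (hord : ∀ Q R : B, Nonempty (R ⟶ Q) → Nonempty (Q ⟶ R) →
      ∀ f : R ⟶ Q, IsIso f)
    [HasBinaryProducts (ACObj B)] :
    ∀ {Q R : B} (f : Q ⟶ R), Epi f :=
  epi_of_multiplicative_general hord
end

section
/- Let B be an ordered multiplicative category with interior structure I, and B̃ its exterior quotient. For objects Q, R, T and a morphism α ∈ B(R,Q) with image α̃, the set B̃(T,Q)_{α̃} of B̃-morphisms not (even partially) extendable via α̃ equals the image in B̃(T,Q) of B(T,Q)_α. -/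
/-!
The quotient functor `B ⥤ B̃` is full and the identity on objects, so every witness
`(Q', θ', α', β')` of extendability in `B̃` lifts to `B` up to composing `α'` and `β'`
with automorphisms in `I`, and every witness in `B` maps to one in `B̃`. The only point
is that `θ'` stays a non-isomorphism under the quotient: if `θ` becomes invertible with
inverse the class of `σ`, then `θ ≫ σ` and `σ ≫ θ` are identities up to automorphisms,
so `θ` is split mono and split epi up to an automorphism, hence an isomorphism.
-/

open CategoryTheory Limits

universe v u

/-- `θ'` divides `α` if `α` factors through `θ'`. -/
def Divides {C : Type*} [Category C] {Q Q' R : C} (θ' : Q ⟶ Q') (α : Q ⟶ R) :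
    Prop :=
  ∃ α' : Q' ⟶ R, θ' ≫ α' = α

/-- `C(T,Q)_α`: the morphisms `β : Q ⟶ T` which cannot, even partially, be
extended via `α`. -/
def RSet {C : Type*} [Category C] {Q R : C} (α : Q ⟶ R) (T : C) :
    Set (Q ⟶ T) :=
  {β | ¬ ∃ (Q' : C) (θ' : Q ⟶ Q'),
        ¬ IsIso θ' ∧ Divides θ' α ∧ ∃ β' : Q' ⟶ T, θ' ≫ β' = β}

/-- The hom-relation defining the exterior quotient `B̃ = B/I`. -/
def extRel {B : Type u} [Category.{v} B] (I : ∀ Q : B, Subgroup (Aut Q)) :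
    HomRel B :=
  fun {_ Q} f g => ∃ χ ∈ I Q, g = f ≫ χ.hom

theorem extRel_congruence {B : Type u} [Category.{v} B] (I : ∀ Q : B, Subgroup (Aut Q))
    (hI : ∀ {R Q : B} (φ : R ⟶ Q), ∀ ρ ∈ I R, ∃ χ ∈ I Q, ρ.hom ≫ φ = φ ≫ χ.hom) :
    Congruence (extRel I) where
  equivalence :=
    { refl f := ⟨1, one_mem _, (Category.comp_id f).symm⟩
      symm := by
        rintro f _ ⟨χ, hχ, rfl⟩
        exact ⟨χ⁻¹, inv_mem hχ, by
          simp [Aut.Aut_inv_def, Iso.symm_hom (χ : _ ≅ _), Iso.hom_inv_id (χ : _ ≅ _)]⟩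
      trans := by
        rintro _ _ _ ⟨χ, hχ, rfl⟩ ⟨χ', hχ', rfl⟩
        exact ⟨χ' * χ, mul_mem hχ' hχ, Category.assoc _ _ _⟩ }
  comp_left := by
    rintro _ _ _ f _ _ ⟨χ, hχ, rfl⟩
    exact ⟨χ, hχ, by simp⟩
  comp_right := by
    rintro _ _ _ f _ g ⟨χ, hχ, rfl⟩
    obtain ⟨χ', hχ', hcomm⟩ := hI g χ hχ
    exact ⟨χ', hχ', by rw [Category.assoc, hcomm, Category.assoc]⟩

theorem mem_RSet_of_map_mem_RSet {C D : Type*} [Category C] [Category D] (F : C ⥤ D)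
    [F.ReflectsIsomorphisms] {Q R T : C} {α : Q ⟶ R} {β : Q ⟶ T}
    (hβ : F.map β ∈ RSet (F.map α) (F.obj T)) : β ∈ RSet α T := by
  rintro ⟨Q', θ', hθ', ⟨α', rfl⟩, β', rfl⟩
  refine hβ ⟨F.obj Q', F.map θ', fun h => hθ' (isIso_of_reflects_iso θ' F),
    ⟨F.map α', (F.map_comp _ _).symm⟩, F.map β', (F.map_comp _ _).symm⟩

def HomRel.IsRightIsoTranslation {C : Type*} [Category C] (r : HomRel C) : Prop :=
  ∀ ⦃X Y : C⦄ ⦃f g : X ⟶ Y⦄, r f g → ∃ e : Y ≅ Y, g = f ≫ e.hom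

theorem extRel_isRightIsoTranslation {B : Type u} [Category.{v} B]
    (I : ∀ Q : B, Subgroup (Aut Q)) : (extRel I).IsRightIsoTranslation :=
  fun _ _ _ _ ⟨χ, _, h⟩ => ⟨χ, h⟩

section RightIsoTranslationQuotient

variable {C : Type*} [Category C] {r : HomRel C} [Congruence r]

theorem Quotient.isIso_of_isIso_functor_map (hr : r.IsRightIsoTranslation)
    {X Y : C} (θ : X ⟶ Y) [IsIso ((Quotient.functor r).map θ)] : IsIso θ := by
  set F := Quotient.functor r
  obtain ⟨σ, hσ⟩ := F.map_surjective (inv (F.map θ))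
  have hθσ : F.map (θ ≫ σ) = F.map (𝟙 X) := by simp [hσ]
  have hσθ : F.map (σ ≫ θ) = F.map (𝟙 Y) := by simp [hσ]
  obtain ⟨e, he⟩ := hr ((Quotient.functor_map_eq_iff r _ _).mp hθσ)
  obtain ⟨e', he'⟩ := hr ((Quotient.functor_map_eq_iff r _ _).mp hσθ)
  have : IsSplitMono θ := IsSplitMono.mk' ⟨σ ≫ e.hom, by simpa using he.symm⟩
  have : IsSplitEpi (θ ≫ e'.hom) := IsSplitEpi.mk' ⟨σ, by simpa using he'.symm⟩
  have : IsIso (θ ≫ e'.hom) := isIso_of_mono_of_isSplitEpi _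
  exact IsIso.of_isIso_comp_right θ e'.hom

theorem Quotient.reflectsIsomorphisms_functor (hr : r.IsRightIsoTranslation) :
    (Quotient.functor r).ReflectsIsomorphisms :=
  ⟨fun θ _ => Quotient.isIso_of_isIso_functor_map hr θ⟩

theorem Quotient.functor_map_mem_RSet (hr : r.IsRightIsoTranslation)
    {Q R T : C} {α : Q ⟶ R} {β : Q ⟶ T} (hβ : β ∈ RSet α T) :
    (Quotient.functor r).map β ∈ RSet ((Quotient.functor r).map α)
      ((Quotient.functor r).obj T) := by
  set F := Quotient.functor r
  rintro ⟨⟨Q'⟩, θq, hθq, ⟨αq, hαq⟩, βq, hβq⟩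
  obtain ⟨θ, rfl⟩ := F.map_surjective (X := Q) (Y := Q') θq
  obtain ⟨α', rfl⟩ := F.map_surjective (X := Q') (Y := R) αq
  obtain ⟨β', rfl⟩ := F.map_surjective (X := Q') (Y := T) βq
  rw [← F.map_comp, Quotient.functor_map_eq_iff] at hαq hβq
  obtain ⟨e, rfl⟩ := hr hαq
  obtain ⟨e', rfl⟩ := hr hβq
  exact hβ ⟨Q', θ, fun h => hθq (F.map_isIso θ), ⟨α' ≫ e.hom, by simp⟩, β' ≫ e'.hom, by simp⟩

end RightIsoTranslationQuotient

theorem restricted_set_of_exterior_quotient_general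
    {B : Type u} [Category.{v} B]
    (I : ∀ Q : B, Subgroup (Aut Q))
    (hI : ∀ {R Q : B} (φ : R ⟶ Q), ∀ ρ ∈ I R, ∃ χ ∈ I Q,
      ρ.hom ≫ φ = φ ≫ χ.hom)
    (Q R T : B) (α : Q ⟶ R) :
    RSet ((Quotient.functor (extRel I)).map α)
        ((Quotient.functor (extRel I)).obj T)
      = (Quotient.functor (extRel I)).map '' (RSet α T) := by
  have := extRel_congruence I hI
  have hr := extRel_isRightIsoTranslation I
  have := Quotient.reflectsIsomorphisms_functor hr
  ext βq
  constructor
  · intro hβq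
    obtain ⟨β, rfl⟩ := (Quotient.functor (extRel I)).map_surjective βq
    exact ⟨β, mem_RSet_of_map_mem_RSet _ hβq, rfl⟩
  · rintro ⟨β, hβ, rfl⟩
    exact Quotient.functor_map_mem_RSet hr hβ

/-- Let `B` be an ordered multiplicative category with interior structure `I`
and exterior quotient `B̃`.  For objects `Q`, `R`, `T` and `α ∈ B(R,Q)` with
image `α̃` in `B̃`, the set `B̃(T,Q)_{α̃}` equals the image in `B̃(T,Q)` of
`B(T,Q)_α`. -/
theorem restricted_set_of_exterior_quotient
    {B : Type u} [Category.{v} B] [Finite B]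
    (hfin : ∀ Q R : B, Finite (Q ⟶ R))
    (hord : ∀ Q R : B, Nonempty (R ⟶ Q) → Nonempty (Q ⟶ R) →
      ∀ f : R ⟶ Q, IsIso f)
    [HasBinaryProducts (ACObj B)]
    (I : ∀ Q : B, Subgroup (Aut Q))
    (hI : ∀ {R Q : B} (φ : R ⟶ Q), ∀ ρ ∈ I R, ∃ χ ∈ I Q,
      ρ.hom ≫ φ = φ ≫ χ.hom)
    (Q R T : B) (α : Q ⟶ R) :
    RSet ((Quotient.functor (extRel I)).map α)
        ((Quotient.functor (extRel I)).obj T)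
      = (Quotient.functor (extRel I)).map '' (RSet α T) :=
  restricted_set_of_exterior_quotient_general I hI Q R T α
end

section
/- Let G be a group acting on a finite set Ω, let P ≤ G be a subgroup, and let A be a module over a commutative ring O. Suppose for each subgroup Q ≤ P and each ω ∈ Ω we are given data satisfying: Q acts on Ω, the stabilizer of ω in Q has index |Q·ω| in Q, and maps a_ω, b_ω : A → A with b_ω ∘ a_ω = (|Q|/|Q_ω|) · id_A where Q_ω is the stabilizer of ω in Q. If |Ω| and |P| are such that |P|/|Ω| makes sense in O (|Ω| divides |P| times a unit), then the map θ(∑_{ω∈Ω} x_ω) = (|P|/|Ω|) · ∑_{ω ∈ Γ} b_ω(x_ω), where Γ is a set of orbit representatives, is a section of the diagonal map Δ(a) = ∑_{ω∈Ω} a_ω(a), i.e., θ(Δ(a)) = a for all a ∈ A, provided each orbit Q·ω·P has size |P|·|Q|/|Q_ω| and ∑_{ω∈Γ} |Q·ω·P| = |Ω|. -/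
open Finset

/-- The section `θ` of the diagonal map `Δ`.  Here `Ω` is a finite set, `Γ` a set
of orbit representatives, `a ω, b ω : A → A` are `O`-linear maps with
`b ω ∘ a ω = (|Q|/|Q_ω|) • id = c ω • id`, the orbit sizes satisfy
`|Q·ω·P| = o ω = nP * c ω` for `ω ∈ Γ` and `∑_{ω∈Γ} o ω = nΩ = |Ω|`, and `nΩ` is
invertible in `O`.  Then `θ(x) = (nP/nΩ) • ∑_{ω∈Γ} b ω (x ω)` satisfies
`θ(Δ(m)) = m` for all `m`, where `Δ(m) = (a ω m)_{ω∈Ω}`. -/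
theorem theta_section_of_diagonal
    {O : Type*} [CommRing O] {A : Type*} [AddCommGroup A] [Module O A]
    {Ω : Type*} [Fintype Ω] [DecidableEq Ω]
    (Γ : Finset Ω)
    (a b : Ω → (A →ₗ[O] A))
    (c o : Ω → ℕ) (nP nΩ : ℕ)
    (hΩcard : Fintype.card Ω = nΩ)
    (hu : IsUnit (nΩ : O))
    (hba : ∀ ω : Ω, (b ω) ∘ₗ (a ω) = ((c ω : O)) • LinearMap.id)
    (horb : ∀ ω ∈ Γ, o ω = nP * c ω)
    (hsum : ∑ ω ∈ Γ, o ω = nΩ) :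
    ∀ m : A,
      ((hu.unit⁻¹ : Oˣ) : O) • ((nP : O) • ∑ ω ∈ Γ, b ω (a ω m)) = m := by
  intro m
  have hb : ∀ ω : Ω, b ω (a ω m) = (c ω : O) • m := by
    intro ω
    have := congrArg (fun f : A →ₗ[O] A => f m) (hba ω)
    simpa using this
  have : (nP : O) • ∑ ω ∈ Γ, b ω (a ω m) = (nΩ : O) • m := by
    simp only [hb]
    rw [Finset.smul_sum]
    have : ∑ ω ∈ Γ, (nP : O) • (c ω : O) • m = ∑ ω ∈ Γ, (o ω : O) • m := by
      refine Finset.sum_congr rfl fun ω hω => ?_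
      rw [horb ω hω, smul_smul, ← Nat.cast_mul]
    rw [this, ← Finset.sum_smul, ← Nat.cast_sum, hsum]
  rw [this, smul_smul]
  have : ((hu.unit⁻¹ : Oˣ) : O) * (nΩ : O) = 1 := by
    exact hu.val_inv_mul
  rw [this, one_smul]
end

section
/- Let I and I° be an interior and a co-interior structure on a small category B such that I(Q) and I°(Q) centralize each other in B(Q,Q) for every object Q. Then the assignment B̃(Q,R) = I(Q)\B(Q,R)/I°(R) defines a well-defined quotient category (composition of double cosets is well defined and associative), and there is a canonical full surjective-on-morphisms functor e : B → B̃ which is the identity on objects. -/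
/-!
Double cosets compose because an automorphism can be pushed through a morphism: the co-interior
condition moves `ρ ∈ I°` on the source of `g` across a precomposed `f`, the interior condition moves
`χ ∈ I` on the target of `f` across a postcomposed `g`. The quotient functor is then full and
surjective on morphisms by construction.
-/

open CategoryTheory

universe v u

/-- The hom-relation of the bi-exterior quotient: two morphisms `R ⟶ Q` are
identified when they lie in the same double coset
`I(Q)\B(Q,R)/I°(R)`, i.e. differ by pre-composition with an automorphism in
`I°(R)` and post-composition with an automorphism in `I(Q)`. -/
def biRel {B : Type u} [Category.{v} B]
    (I : ∀ Q : B, Subgroup (Aut Q)) (Ic : ∀ Q : B, Subgroup (Aut Q)) :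
    HomRel B :=
  fun {R Q} f g => ∃ χ ∈ I Q, ∃ ρ ∈ Ic R, g = ρ.hom ≫ f ≫ χ.hom

namespace CategoryTheory.Aut

variable {B : Type u} [Category.{v} B] {X : B}

@[simp]
lemma one_hom : (1 : Aut X).hom = 𝟙 X := rfl

@[simp]
lemma mul_hom (χ χ' : Aut X) : (χ * χ').hom = χ'.hom ≫ χ.hom := rfl

@[simp]
lemma inv_hom_hom_assoc {Y : B} (χ : Aut X) (f : X ⟶ Y) : χ⁻¹.hom ≫ χ.hom ≫ f = f :=
  Iso.inv_hom_id_assoc χ f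

@[simp]
lemma hom_inv_hom (χ : Aut X) : χ.hom ≫ χ⁻¹.hom = 𝟙 X :=
  Iso.hom_inv_id χ

end CategoryTheory.Aut

section BiRel

variable {B : Type u} [Category.{v} B] (I Ic : ∀ Q : B, Subgroup (Aut Q))

lemma biRel_equivalence {R Q : B} : Equivalence (@biRel B _ I Ic R Q) where
  refl f := ⟨1, one_mem _, 1, one_mem _, by simp⟩
  symm := by
    rintro f _ ⟨χ, hχ, ρ, hρ, rfl⟩
    exact ⟨χ⁻¹, inv_mem hχ, ρ⁻¹, inv_mem hρ, by simp⟩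
  trans := by
    rintro f _ _ ⟨χ, hχ, ρ, hρ, rfl⟩ ⟨χ', hχ', ρ', hρ', rfl⟩
    exact ⟨χ' * χ, mul_mem hχ' hχ, ρ * ρ', mul_mem hρ hρ', by simp⟩

lemma biRel_isStableUnderPrecomp
    (hIc : ∀ {R Q : B} (φ : R ⟶ Q), ∀ χ ∈ Ic Q, ∃ ρ ∈ Ic R, φ ≫ χ.hom = ρ.hom ≫ φ) :
    HomRel.IsStableUnderPrecomp (biRel I Ic) where
  comp_left := by
    rintro X Y Z f g _ ⟨χ, hχ, ρ, hρ, rfl⟩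
    obtain ⟨ρ', hρ', hf⟩ := hIc f ρ hρ
    exact ⟨χ, hχ, ρ', hρ', by rw [← Category.assoc f, hf]; simp only [Category.assoc]⟩

lemma biRel_isStableUnderPostcomp
    (hI : ∀ {R Q : B} (φ : R ⟶ Q), ∀ ρ ∈ I R, ∃ χ ∈ I Q, ρ.hom ≫ φ = φ ≫ χ.hom) :
    HomRel.IsStableUnderPostcomp (biRel I Ic) where
  comp_right := by
    rintro X Y Z f _ g ⟨χ, hχ, ρ, hρ, rfl⟩
    obtain ⟨χ', hχ', hg⟩ := hI g χ hχ
    exact ⟨χ', hχ', ρ, hρ, by simp only [Category.assoc, hg]⟩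

lemma biRel_congruence
    (hI : ∀ {R Q : B} (φ : R ⟶ Q), ∀ ρ ∈ I R, ∃ χ ∈ I Q, ρ.hom ≫ φ = φ ≫ χ.hom)
    (hIc : ∀ {R Q : B} (φ : R ⟶ Q), ∀ χ ∈ Ic Q, ∃ ρ ∈ Ic R, φ ≫ χ.hom = ρ.hom ≫ φ) :
    Congruence (biRel I Ic) :=
  have := biRel_isStableUnderPrecomp I Ic hIc
  have := biRel_isStableUnderPostcomp I Ic hI
  { equivalence := biRel_equivalence I Ic }

end BiRel

theorem bi_exterior_quotient_well_defined_general
    {B : Type u} [Category.{v} B]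
    (I : ∀ Q : B, Subgroup (Aut Q)) (Ic : ∀ Q : B, Subgroup (Aut Q))
    -- interior structure: `φ ∘ I(R) ⊆ I(Q) ∘ φ`
    (hI : ∀ {R Q : B} (φ : R ⟶ Q), ∀ ρ ∈ I R, ∃ χ ∈ I Q,
      ρ.hom ≫ φ = φ ≫ χ.hom)
    -- co-interior structure: `I°(Q) ∘ φ ⊆ φ ∘ I°(R)`
    (hIc : ∀ {R Q : B} (φ : R ⟶ Q), ∀ χ ∈ Ic Q, ∃ ρ ∈ Ic R,
      φ ≫ χ.hom = ρ.hom ≫ φ) :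
    Congruence (biRel I Ic) ∧
    (∀ X : B, ((Quotient.functor (biRel I Ic)).obj X).as = X) ∧
    (Quotient.functor (biRel I Ic)).Full ∧
    (∀ (X Y : B)
      (f : (Quotient.functor (biRel I Ic)).obj X ⟶
           (Quotient.functor (biRel I Ic)).obj Y),
      ∃ g : X ⟶ Y, (Quotient.functor (biRel I Ic)).map g = f) :=
  ⟨biRel_congruence I Ic hI hIc, fun _ => rfl, inferInstance,
    fun _ _ f => (Quotient.functor (biRel I Ic)).map_surjective f⟩

/-- Let `I` be an interior and `I°` a co-interior structure on `B` such that
`I(Q)` and `I°(Q)` centralize each other for every object `Q`.  Then the double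
coset relation `B̃(Q,R) = I(Q)\B(Q,R)/I°(R)` is a congruence (so that
composition of double cosets is well defined), and the canonical functor
`e : B → B̃` is the identity on objects, full, and surjective on morphisms. -/
theorem bi_exterior_quotient_well_defined
    {B : Type u} [Category.{v} B]
    (I : ∀ Q : B, Subgroup (Aut Q)) (Ic : ∀ Q : B, Subgroup (Aut Q))
    -- interior structure: `φ ∘ I(R) ⊆ I(Q) ∘ φ`
    (hI : ∀ {R Q : B} (φ : R ⟶ Q), ∀ ρ ∈ I R, ∃ χ ∈ I Q,
      ρ.hom ≫ φ = φ ≫ χ.hom)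
    -- co-interior structure: `I°(Q) ∘ φ ⊆ φ ∘ I°(R)`
    (hIc : ∀ {R Q : B} (φ : R ⟶ Q), ∀ χ ∈ Ic Q, ∃ ρ ∈ Ic R,
      φ ≫ χ.hom = ρ.hom ≫ φ)
    -- `I(Q)` and `I°(Q)` centralize each other
    (hcomm : ∀ (Q : B), ∀ χ ∈ I Q, ∀ ρ ∈ Ic Q,
      χ.hom ≫ ρ.hom = ρ.hom ≫ χ.hom) :
    Congruence (biRel I Ic) ∧
    (∀ X : B, ((Quotient.functor (biRel I Ic)).obj X).as = X) ∧
    (Quotient.functor (biRel I Ic)).Full ∧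
    (∀ (X Y : B)
      (f : (Quotient.functor (biRel I Ic)).obj X ⟶
           (Quotient.functor (biRel I Ic)).obj Y),
      ∃ g : X ⟶ Y, (Quotient.functor (biRel I Ic)).map g = f) :=
  bi_exterior_quotient_well_defined_general I Ic hI hIc
end
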